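/- arXiv:2411.05238 — 4 statements merged into one kernel-verified Lean document; each statement's English description precedes it below -/
import Mathlib

section
/- Let V be a vector space over ℝ and let a, b ∈ V be linearly independent. Then for any x ∈ V, x lies in the span of {a, b} if and only if the outer product of x with the 2-blade a∧b vanishes in the exterior algebra: x ∈ span{a, b} ↔ ι(x) * ι(a) * ι(b) = 0 in ExteriorAlgebra ℝ V. (A homogeneous subspace is characterized by the vanishing of the outer product with its representing blade.) -/
/-! `x ∧ a ∧ b` is the alternating map `ιMulti` evaluated at `(x, a, b)`. Over a field, `ιMulti`
vanishes exactly on the linearly dependent families, since the wedge products of the vectors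
of a basis form a basis of the exterior power; and when `a, b` are independent, `(x, a, b)` is
dependent exactly when `x ∈ span {a, b}`. -/

namespace ExteriorAlgebra

section Field

variable {K E : Type*} [Field K] [AddCommGroup E] [Module K E]

theorem ιMulti_ne_zero_of_linearIndependent {n : ℕ} {v : Fin n → E}
    (hv : LinearIndependent K v) : ιMulti K n v ≠ 0 := by
  have hne := (exteriorPower.ιMulti_family_linearIndependent_field (n := n) hv).ne_zero
    (Set.powersetCard.ofFinEmbEquiv (OrderEmbedding.id (Fin n)))
  rwa [exteriorPower.ιMulti_family, Equiv.symm_apply_apply, Ne, ← Submodule.coe_eq_zero,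
    exteriorPower.ιMulti_apply_coe] at hne

theorem ιMulti_eq_zero_iff_not_linearIndependent {n : ℕ} (v : Fin n → E) :
    ιMulti K n v = 0 ↔ ¬LinearIndependent K v :=
  ⟨fun h hv => ιMulti_ne_zero_of_linearIndependent hv h, (ιMulti K n).map_linearDependent v⟩

end Field

theorem ιMulti_three {R M : Type*} [CommRing R] [AddCommGroup M] [Module R M] (x y z : M) :
    ιMulti R 3 ![x, y, z] = ι R x * ι R y * ι R z := by
  simp [ιMulti_apply, mul_assoc]

end ExteriorAlgebra

theorem linearIndependent_vecCons_iff_notMem_span_pair {K V : Type*} [DivisionRing K]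
    [AddCommGroup V] [Module K V] {a b : V} (h : LinearIndependent K ![a, b]) (x : V) :
    LinearIndependent K ![x, a, b] ↔ x ∉ Submodule.span K {a, b} := by
  rw [← Matrix.range_cons_cons_empty a b ![]]
  exact linearIndependent_finCons.trans (and_iff_right h)

/-- A homogeneous subspace is characterized by the vanishing of the outer product with
its representing blade: for linearly independent `a, b`, a vector `x` lies in
`span {a, b}` iff `x ∧ a ∧ b = 0` in the exterior algebra. -/
theorem mem_span_iff_wedge_eq_zero {V : Type*} [AddCommGroup V] [Module ℝ V]
    (a b : V) (h : LinearIndependent ℝ ![a, b]) (x : V) :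
    x ∈ Submodule.span ℝ ({a, b} : Set V) ↔
      ExteriorAlgebra.ι ℝ x * ExteriorAlgebra.ι ℝ a * ExteriorAlgebra.ι ℝ b = 0 := by
  rw [← ExteriorAlgebra.ιMulti_three, ExteriorAlgebra.ιMulti_eq_zero_iff_not_linearIndependent,
    linearIndependent_vecCons_iff_notMem_span_pair h, not_not]
end

section
/- In the projective geometric algebra Cl(3,0,1), reflecting a plane in a plane is realized by the vector sandwich product: for p = ι(δ, n) with ‖n‖ = 1 representing the mirror plane and m = ι(δ', n') representing an arbitrary plane, one has −ι(δ, n) * ι(δ', n') * ι(δ, n) = ι(δ' − 2⟪n,n'⟫δ, n' − 2⟪n,n'⟫•n); i.e., the result is again a vector, representing the reflected plane (its normal is the Euclidean reflection of n' across n, and its offset is transformed accordingly). -/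
open scoped RealInnerProductSpace

/-- The degenerate quadratic form `Q₀(δ, n) = ‖n‖²` on `ℝ × ℝ³` defining the
projective geometric algebra `Cl(3,0,1)`; the null vector `e₀ = (1, 0)` satisfies
`Q₀ e₀ = 0`. -/
noncomputable def Qpga : QuadraticForm ℝ (ℝ × EuclideanSpace ℝ (Fin 3)) :=
  (LinearMap.BilinMap.toQuadraticMap (innerₗ (EuclideanSpace ℝ (Fin 3)))).comp
    (LinearMap.snd ℝ ℝ (EuclideanSpace ℝ (Fin 3)))

theorem CliffordAlgebra.neg_ι_mul_ι_mul_ι_of_eq_one {R M : Type*} [CommRing R]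
    [AddCommGroup M] [Module R M] {Q : QuadraticForm R M} {a : M} (ha : Q a = 1) (b : M) :
    -(ι Q a * ι Q b * ι Q a) = ι Q (b - QuadraticMap.polar Q a b • a) := by
  rw [ι_mul_ι_mul_ι, ha, one_smul, ← map_neg, neg_sub]

theorem Qpga_apply (v : ℝ × EuclideanSpace ℝ (Fin 3)) : Qpga v = ‖v.2‖ ^ 2 := by
  simp only [Qpga, QuadraticMap.comp_apply, LinearMap.snd_apply,
    LinearMap.BilinMap.toQuadraticMap_apply, innerₗ_apply_apply, real_inner_self_eq_norm_sq]

theorem polar_Qpga (v w : ℝ × EuclideanSpace ℝ (Fin 3)) :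
    QuadraticMap.polar Qpga v w = 2 * ⟪v.2, w.2⟫ := by
  rw [QuadraticMap.polar, Qpga_apply, Qpga_apply, Qpga_apply, Prod.snd_add,
    norm_add_sq_real]
  ring

/-- In PGA, reflecting the plane `ι(δ', n')` in the unit plane `ι(δ, n)` via the
sandwich product yields again a vector, representing the reflected plane. -/
theorem pga_plane_reflection (δ δ' : ℝ) (n n' : EuclideanSpace ℝ (Fin 3)) (hn : ‖n‖ = 1) :
    -(CliffordAlgebra.ι Qpga (δ, n) * CliffordAlgebra.ι Qpga (δ', n') *
        CliffordAlgebra.ι Qpga (δ, n))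
      = CliffordAlgebra.ι Qpga (δ' - 2 * ⟪n, n'⟫ * δ, n' - (2 * ⟪n, n'⟫) • n) := by
  have hunit : Qpga (δ, n) = 1 := by rw [Qpga_apply, hn, one_pow]
  rw [CliffordAlgebra.neg_ι_mul_ι_mul_ι_of_eq_one hunit, polar_Qpga]
  rfl
end

section
/- In the projective geometric algebra Cl(3,0,1), the translator obtained from two parallel unit planes acts on planes by translation: for any unit vector n ∈ ℝ³ and δ ∈ ℝ, set T = ι(δ, n) * ι(0, n); then for every plane vector m = ι(δ', n'), T * ι(δ', n') * reverse(T) = ι(δ' + 2δ⟪n,n'⟫, n'). That is, the sandwich by T leaves the plane's normal n' unchanged and shifts its offset by 2δ⟪n,n'⟫, which is exactly the effect of translating the plane by the vector −2δ•n. -/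
/-!
The sandwich by a product of two vectors `ι a * ι b` is the composite of the reflections
`m ↦ polar a m • a - Q a • m` and `m ↦ polar b m • b - Q b • m` (each one is
`CliffordAlgebra.ι_mul_ι_mul_ι`). For the planes `a = (δ, n)` and `b = (0, n)` with `‖n‖ = 1`,
reflecting in `b` sends `(δ', n')` to `(-δ', c • n - n')` with `c = 2⟪n, n'⟫`, and reflecting
that in `a` gives `(δ' + c δ, n')`.
-/

open scoped RealInnerProductSpace

namespace CliffordAlgebra

variable {R M : Type*} [CommRing R] [AddCommGroup M] [Module R M] {Q : QuadraticForm R M}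

theorem ι_mul_ι_mul_ι_mul_reverse (a b m : M) :
    ι Q a * ι Q b * ι Q m * reverse (ι Q a * ι Q b) =
      ι Q (QuadraticMap.polar Q a (QuadraticMap.polar Q b m • b - Q b • m) • a -
        Q a • (QuadraticMap.polar Q b m • b - Q b • m)) := by
  rw [reverse.map_mul, reverse_ι, reverse_ι, ← ι_mul_ι_mul_ι, ← ι_mul_ι_mul_ι]
  simp only [mul_assoc]

end CliffordAlgebra

lemma Qpga_apply_s11 (a : ℝ) (u : EuclideanSpace ℝ (Fin 3)) : Qpga (a, u) = ⟪u, u⟫ := rfl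

lemma Qpga_polar (a b : ℝ) (u v : EuclideanSpace ℝ (Fin 3)) :
    QuadraticMap.polar Qpga (a, u) (b, v) = 2 * ⟪u, v⟫ := by
  simp only [QuadraticMap.polar, Prod.mk_add_mk, Qpga_apply_s11, inner_add_left, inner_add_right,
    real_inner_comm u v]
  ring

/-- The translator `T = ι(δ, n) * ι(0, n)` acts on planes by translation: it leaves
the normal `n'` unchanged and shifts the offset by `2δ⟪n,n'⟫`. -/
theorem pga_translator_action (δ : ℝ) (n : EuclideanSpace ℝ (Fin 3)) (hn : ‖n‖ = 1)
    (δ' : ℝ) (n' : EuclideanSpace ℝ (Fin 3)) :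
    (CliffordAlgebra.ι Qpga (δ, n) * CliffordAlgebra.ι Qpga (0, n)) *
        CliffordAlgebra.ι Qpga (δ', n') *
        CliffordAlgebra.reverse
          (CliffordAlgebra.ι Qpga (δ, n) * CliffordAlgebra.ι Qpga (0, n))
      = CliffordAlgebra.ι Qpga (δ' + 2 * δ * ⟪n, n'⟫, n') := by
  have hnn : ⟪n, n⟫ = 1 := by rw [real_inner_self_eq_norm_sq, hn, one_pow]
  have reflect_b : QuadraticMap.polar Qpga (0, n) (δ', n') • ((0 : ℝ), n) - Qpga (0, n) • (δ', n')
      = (-δ', (2 * ⟪n, n'⟫) • n - n') := by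
    rw [Qpga_polar, Qpga_apply_s11, hnn, one_smul, Prod.smul_mk, smul_zero, Prod.mk_sub_mk, zero_sub]
  rw [CliffordAlgebra.ι_mul_ι_mul_ι_mul_reverse, reflect_b, Qpga_polar, Qpga_apply_s11, hnn]
  congr 1
  refine Prod.ext ?_ ?_
  · simp only [inner_sub_right, inner_smul_right, hnn, Prod.fst_sub, Prod.smul_fst, smul_eq_mul,
      one_smul]
    ring
  · simp only [inner_sub_right, inner_smul_right, hnn, Prod.snd_sub, Prod.smul_snd, one_smul]
    module
end

section
/- (Cartan–Dieudonné) Let E be a finite-dimensional real inner product space of dimension d. Then every linear isometry equivalence f : E ≃ E (orthogonal transformation) can be written as a composition of at most d hyperplane reflections: there exists a list of nonzero vectors v₁, …, v_k ∈ E with k ≤ d such that f = r_{v₁} ∘ r_{v₂} ∘ ⋯ ∘ r_{v_k}, where r_v denotes the reflection across the hyperplane orthogonal to v (with r of the empty list being the identity). -/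
/-!
Mathlib's `LinearIsometryEquiv.reflections_generate_dim` already factors `f` into at most
`finrank ℝ E` reflections in hyperplanes `(ℝ ∙ v)ᗮ`. These agree with `reflVec v`, and the factors
with `v = 0` (reflection in the whole space) are the identity, so they can be dropped.
-/

open scoped RealInnerProductSpace

/-- Euclidean reflection across the hyperplane orthogonal to a (nonzero) vector `v`. -/
noncomputable def reflVec {E : Type*} [NormedAddCommGroup E] [InnerProductSpace ℝ E]
    (v x : E) : E :=
  x - (2 * (⟪x, v⟫ / ⟪v, v⟫)) • v

section

variable {E : Type*} [NormedAddCommGroup E] [InnerProductSpace ℝ E]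

theorem reflVec_eq_reflection (v : E) : reflVec v = ⇑(Submodule.reflection (ℝ ∙ v)ᗮ) := by
  funext x
  rw [reflVec, Submodule.reflection_orthogonal_apply, Submodule.reflection_singleton_apply,
    real_inner_comm x v, real_inner_self_eq_norm_sq, two_smul, mul_smul, two_smul]
  abel

-- Division by `⟪0, 0⟫ = 0` makes the junk value `reflVec 0` the identity.
theorem reflVec_zero : reflVec (0 : E) = id := by
  funext x
  simp [reflVec]

theorem coe_prod_map_reflection (t : List E) :
    ⇑(t.map fun v => Submodule.reflection (ℝ ∙ v)ᗮ).prod =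
      t.foldr (fun v g => reflVec v ∘ g) id := by
  induction t with
  | nil => rfl
  | cons v t ih =>
    rw [List.map_cons, List.prod_cons, LinearIsometryEquiv.coe_mul, ih, List.foldr_cons,
      reflVec_eq_reflection]

theorem exists_ne_zero_foldr_reflVec_eq (t : List E) :
    ∃ l : List E, l.length ≤ t.length ∧ (∀ v ∈ l, v ≠ 0) ∧
      l.foldr (fun v g => reflVec v ∘ g) id = t.foldr (fun v g => reflVec v ∘ g) id := by
  classical
  refine ⟨t.filter (· ≠ 0), List.length_filter_le _ t, fun v hv => ?_, ?_⟩
  · simpa using (List.mem_filter.mp hv).2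
  · induction t with
    | nil => rfl
    | cons v t ih =>
      rw [List.filter_cons, List.foldr_cons]
      by_cases hv : v = 0
      · rw [if_neg (by simpa using hv), ih, hv, reflVec_zero, Function.id_comp]
      · rw [if_pos (by simpa using hv), List.foldr_cons, ih]

end

/-- **Cartan–Dieudonné**: every orthogonal transformation of a `d`-dimensional real
inner product space is a composition of at most `d` hyperplane reflections. -/
theorem cartan_dieudonne {E : Type*} [NormedAddCommGroup E] [InnerProductSpace ℝ E]
    [FiniteDimensional ℝ E] (f : E ≃ₗᵢ[ℝ] E) :
    ∃ l : List E, l.length ≤ Module.finrank ℝ E ∧ (∀ v ∈ l, v ≠ 0) ∧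
      ⇑f = l.foldr (fun v g => reflVec v ∘ g) id := by
  obtain ⟨t, ht, rfl⟩ := f.reflections_generate_dim
  obtain ⟨l, hlt, hl, hfoldr⟩ := exists_ne_zero_foldr_reflVec_eq t
  exact ⟨l, hlt.trans ht, hl, by rw [hfoldr, coe_prod_map_reflection]⟩
end
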